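/- Let Y be a standard Gaussian vector in R^n, theta in R^k with ||theta||_infinity <= M, and lambda > 0. If P(| ||Y|| - sqrt(n) | >= lambda/M) <= delta and, for all theta' in R^k, P(W^T Y in Rect(theta' + lambda*1) \ Rect(theta' - lambda*1)) <= q, then |P(W^T Y in ||Y|| * Rect(theta)) - P(W^T Y in sqrt(n) * Rect(theta))| <= delta + q. -/

import Mathlib

/-! Off an event of probability at most `δ`, the thresholds `‖Y‖ θ` and `√n θ` differ by at
most `λ` in every coordinate, so the two rectangles differ only inside the band
`Rect (√n θ + λ) \ Rect (√n θ - λ)`, which has probability at most `q`. -/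

open MeasureTheory ProbabilityTheory

/-- `Rect θ` is the set `(-∞, θ 1] × ⋯ × (-∞, θ k]`. -/
def Rect {k : ℕ} (θ : Fin k → ℝ) : Set (Fin k → ℝ) := {a | ∀ p, a p ≤ θ p}

open scoped symmDiff

lemma symmDiff_Rect_subset_of_abs_sub_le {k : ℕ} {a b : Fin k → ℝ} {lam : ℝ}
    (h : ∀ p, |a p - b p| ≤ lam) :
    Rect a ∆ Rect b ⊆ Rect (fun p => b p + lam) \ Rect (fun p => b p - lam) := by
  rintro x (⟨hxa, hxb⟩ | ⟨hxb, hxa⟩) <;>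
    simp only [Rect, Set.mem_sdiff, Set.mem_ofPred_eq, not_forall, not_le] at *
  · obtain ⟨p, hp⟩ := hxb
    exact ⟨fun i => by linarith [hxa i, (abs_le.mp (h i)).2],
      p, by linarith [abs_nonneg (a p - b p), h p]⟩
  · obtain ⟨p, hp⟩ := hxa
    exact ⟨fun i => by linarith [hxb i, abs_nonneg (a i - b i), h i],
      p, by linarith [(abs_le.mp (h p)).1]⟩

/-- Unlike `abs_measureReal_sub_le_measureReal_symmDiff`, this needs no measurability: only
subadditivity of the outer measure is used. -/
lemma abs_measureReal_sub_le_of_symmDiff_subset {α : Type*} [MeasurableSpace α] {μ : Measure α}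
    [IsFiniteMeasure μ] {s t u : Set α} (h : s ∆ t ⊆ u) :
    |μ.real s - μ.real t| ≤ μ.real u := by
  have key : ∀ a b : Set α, a ∆ b ⊆ u → μ.real a ≤ μ.real b + μ.real u :=
    fun a b hab => calc
      μ.real a ≤ μ.real (b ∪ u) :=
        measureReal_mono (Set.sdiff_subset_iff.mp (Set.subset_union_left.trans hab))
      _ ≤ μ.real b + μ.real u := measureReal_union_le b u
  rw [abs_sub_le_iff]
  constructor
  · linarith [key s t h]
  · linarith [key t s (symmDiff_comm s t ▸ h)]

theorem stmt_15_general (n k : ℕ) (W : Fin n → Fin k → ℝ) (θ : Fin k → ℝ)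
    (M lam δ q : ℝ) (hM : 0 < M) (hδ : 0 ≤ δ) (hq : 0 ≤ q)
    (hθ : ∀ p, |θ p| ≤ M)
    (hnorm : (Measure.pi fun _ : Fin n => gaussianReal 0 1)
        {y | lam / M ≤ |Real.sqrt (∑ i, (y i) ^ 2) - Real.sqrt n|} ≤ ENNReal.ofReal δ)
    (hanti : ∀ θ' : Fin k → ℝ,
      (Measure.pi fun _ : Fin n => gaussianReal 0 1)
        {y | (fun p => ∑ i, W i p * y i) ∈
          Rect (fun p => θ' p + lam) \ Rect (fun p => θ' p - lam)} ≤ ENNReal.ofReal q) :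
    |((Measure.pi fun _ : Fin n => gaussianReal 0 1)
        {y | (fun p => ∑ i, W i p * y i) ∈
          Rect (fun p => Real.sqrt (∑ i, (y i) ^ 2) * θ p)}).toReal -
      ((Measure.pi fun _ : Fin n => gaussianReal 0 1)
        {y | (fun p => ∑ i, W i p * y i) ∈
          Rect (fun p => Real.sqrt n * θ p)}).toReal| ≤ δ + q := by
  set μ : Measure (Fin n → ℝ) := Measure.pi fun _ : Fin n => gaussianReal 0 1
  set E := {y : Fin n → ℝ | lam / M ≤ |Real.sqrt (∑ i, (y i) ^ 2) - Real.sqrt n|}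
  set C := {y : Fin n → ℝ | (fun p => ∑ i, W i p * y i) ∈
    Rect (fun p => Real.sqrt n * θ p + lam) \ Rect (fun p => Real.sqrt n * θ p - lam)}
  have hclose : ∀ s t : ℝ, |s - t| < lam / M → ∀ p, |s * θ p - t * θ p| ≤ lam :=
    fun s t hst p => calc
      |s * θ p - t * θ p| = |s - t| * |θ p| := by rw [← sub_mul, abs_mul]
      _ ≤ lam / M * M :=
        mul_le_mul hst.le (hθ p) (abs_nonneg _) (by linarith [abs_nonneg (s - t)])
      _ = lam := div_mul_cancel₀ _ hM.ne'
  have hsub : {y | (fun p => ∑ i, W i p * y i) ∈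
        Rect (fun p => Real.sqrt (∑ i, (y i) ^ 2) * θ p)} ∆
      {y | (fun p => ∑ i, W i p * y i) ∈ Rect (fun p => Real.sqrt n * θ p)} ⊆ E ∪ C := by
    intro y hy
    by_cases hyE : y ∈ E
    · exact Or.inl hyE
    · exact Or.inr (symmDiff_Rect_subset_of_abs_sub_le (hclose _ _ (not_le.mp hyE)) hy)
  calc _ ≤ μ.real (E ∪ C) := abs_measureReal_sub_le_of_symmDiff_subset hsub
    _ ≤ μ.real E + μ.real C := measureReal_union_le E C
    _ ≤ δ + q := add_le_add (ENNReal.toReal_le_of_le_ofReal hδ hnorm)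
        (ENNReal.toReal_le_of_le_ofReal hq (hanti _))

theorem stmt_15 (n k : ℕ) (W : Fin n → Fin k → ℝ) (θ : Fin k → ℝ)
    (M lam δ q : ℝ) (hM : 0 < M) (hlam : 0 < lam) (hδ : 0 ≤ δ) (hq : 0 ≤ q)
    (hθ : ∀ p, |θ p| ≤ M)
    (hnorm : (Measure.pi fun _ : Fin n => gaussianReal 0 1)
        {y | lam / M ≤ |Real.sqrt (∑ i, (y i) ^ 2) - Real.sqrt n|} ≤ ENNReal.ofReal δ)
    (hanti : ∀ θ' : Fin k → ℝ,
      (Measure.pi fun _ : Fin n => gaussianReal 0 1)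
        {y | (fun p => ∑ i, W i p * y i) ∈
          Rect (fun p => θ' p + lam) \ Rect (fun p => θ' p - lam)} ≤ ENNReal.ofReal q) :
    |((Measure.pi fun _ : Fin n => gaussianReal 0 1)
        {y | (fun p => ∑ i, W i p * y i) ∈
          Rect (fun p => Real.sqrt (∑ i, (y i) ^ 2) * θ p)}).toReal -
      ((Measure.pi fun _ : Fin n => gaussianReal 0 1)
        {y | (fun p => ∑ i, W i p * y i) ∈
          Rect (fun p => Real.sqrt n * θ p)}).toReal| ≤ δ + q :=
  stmt_15_general n k W θ M lam δ q hM hδ hq hθ hnorm hanti
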